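/- arXiv:2410.11461 — 3 statements merged into one kernel-verified Lean document; each statement's English description precedes it below -/
import Mathlib

section
/- Let M be a smooth (C^∞) manifold, possibly with boundary, let M' be a smooth manifold without boundary, let E ⊆ M be a closed subset, and let f : M → M' be a continuous map that is smooth on some open neighborhood of E. Then for every open set U ⊆ M × M' containing the graph {(x, f(x)) : x ∈ M} of f, there exists a smooth map g : M → M' such that g = f on E and the graph of g is contained in U. -/
/-!
Cover `M` by a locally finite sequence of precompact open sets `W i`, each mapped by `f` into a
single chart of `M'`, together with closed sets `K i ⊆ W i` that still cover `M`. After shrinking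
`U` so that over `closure (W i)` it only allows values in that chart, `f` is modified on
`W 0, W 1, …` in turn. In the `i`-th chart, a smooth approximation (obtained from a partition of
unity) is blended into the map with a cutoff that is `1` near `K i` and vanishes outside `W i`.
If the approximation is close enough, the graph stays inside `U`. Each modification keeps the
map equal to `f` on `A` and smooth where it already was, and makes it smooth near `K i`. By local
finiteness the sequence is eventually constant near every point, and its limit is the required
map.
-/

open Set Filter Topology
open scoped Manifold ContDiff

theorem exists_seq_of_forall_exists_succ {α : Type*} {P : ℕ → α → Prop}
    {R : ℕ → α → α → Prop} {a : α} (ha : P 0 a)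
    (h : ∀ n a, P n a → ∃ b, P (n + 1) b ∧ R n a b) :
    ∃ s : ℕ → α, (∀ n, P n (s n)) ∧ ∀ n, R n (s n) (s (n + 1)) := by
  choose next hnext hR using h
  let s : ∀ n, {b // P n b} := fun n =>
    Nat.rec ⟨a, ha⟩ (fun n b => ⟨next n b b.2, hnext n b b.2⟩) n
  exact ⟨fun n => (s n).1, fun n => (s n).2, fun n => hR n (s n).1 (s n).2⟩

section Topology

variable {X : Type*} [TopologicalSpace X]

theorem LocallyFinite.iUnion_decode₂ {α : Type*} [Encodable α] {f : α → Set X}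
    (hf : LocallyFinite f) : LocallyFinite fun n => ⋃ a ∈ Encodable.decode₂ α n, f a := by
  intro x
  obtain ⟨t, ht, hfin⟩ := hf x
  refine ⟨t, ht, (hfin.image Encodable.encode).subset ?_⟩
  rintro n ⟨y, hy, hyt⟩
  obtain ⟨a, ha, hya⟩ := mem_iUnion₂.mp hy
  exact ⟨a, ⟨y, hya, hyt⟩, Encodable.mem_decode₂.mp ha⟩

theorem exists_nat_locallyFinite_precompact_cover [T2Space X] [LocallyCompactSpace X]
    [SigmaCompactSpace X] [Nonempty X] (s : X → Set X) (hs : ∀ x, s x ∈ 𝓝 x) :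
    ∃ W K : ℕ → Set X, (∀ n, IsOpen (W n)) ∧ (∀ n, IsCompact (closure (W n))) ∧
      (∀ n, ∃ x, closure (W n) ⊆ s x) ∧ LocallyFinite W ∧ (∀ n, IsClosed (K n)) ∧
      (∀ n, K n ⊆ W n) ∧ ⋃ n, K n = univ := by
  have hbasis : ∀ x,
      (𝓝 x).HasBasis (fun t => (t ∈ 𝓝 x ∧ IsCompact t) ∧ t ⊆ s x) interior :=
    fun x => ((compact_basis_nhds x).restrict_subset (hs x)).to_hasBasis'
      (fun t ht => ⟨t, ht, interior_subset⟩) fun t ht => interior_mem_nhds.mpr ht.1.1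
  obtain ⟨α, c, t, ht, hcov, hfin⟩ :=
    refinement_of_locallyCompact_sigmaCompact_of_nhds_basis hbasis
  have : Countable α := countable_univ_iff.mp <|
    hfin.countable_univ fun a => ⟨c a, mem_interior_iff_mem_nhds.mpr (ht a).1.1⟩
  have : Nonempty α :=
    let ⟨a, _⟩ := mem_iUnion.mp (hcov.symm ▸ mem_univ (Classical.arbitrary X)); ⟨a⟩
  have := Encodable.ofCountable α
  set W : ℕ → Set X := fun n => ⋃ a ∈ Encodable.decode₂ α n, interior (t a)
  have hWo : ∀ n, IsOpen (W n) := fun n => isOpen_biUnion fun _ _ => isOpen_interior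
  have hWt : ∀ n, ∃ a, closure (W n) ⊆ t a := by
    intro n
    rcases hn : Encodable.decode₂ α n with _ | a
    · exact ⟨Classical.arbitrary α, by simp [W, hn]⟩
    · refine ⟨a, closure_minimal ?_ (ht a).1.2.isClosed⟩
      simpa [W, hn] using interior_subset
  have hWlf : LocallyFinite W := hfin.iUnion_decode₂
  obtain ⟨v, hvcov, -, hvW⟩ := exists_subset_iUnion_closure_subset isClosed_univ hWo
    (fun x _ => hWlf.point_finite x) (by rw [Encodable.iUnion_decode₂, hcov])
  refine ⟨W, fun n => closure (v n), hWo, fun n => ?_, fun n => ?_, hWlf,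
    fun _ => isClosed_closure, hvW, univ_subset_iff.mp (hvcov.trans ?_)⟩
  · obtain ⟨a, ha⟩ := hWt n
    exact (ht a).1.2.of_isClosed_subset isClosed_closure ha
  · obtain ⟨a, ha⟩ := hWt n
    exact ⟨c a, ha.trans (ht a).2⟩
  · exact iUnion_mono fun n => subset_closure

theorem LocallyFinite.isOpen_setOf_forall_mem_imp {Y ι : Type*} [TopologicalSpace Y]
    {F : ι → Set X} {T : ι → Set Y} (hF : LocallyFinite F) (hFc : ∀ i, IsClosed (F i))
    (hT : ∀ i, IsOpen (T i)) : IsOpen {q : X × Y | ∀ i, q.1 ∈ F i → q.2 ∈ T i} := by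
  have : {q : X × Y | ∀ i, q.1 ∈ F i → q.2 ∈ T i} = (⋃ i, F i ×ˢ (T i)ᶜ)ᶜ := by
    ext; simp
  rw [this]
  refine (LocallyFinite.isClosed_iUnion ?_ fun i => (hFc i).prod (hT i).isClosed_compl).isOpen_compl
  exact (hF.preimage_continuous continuous_fst).subset fun i => prod_subset_preimage_fst _ _

theorem IsCompact.exists_pos_forall_dist_lt_mem {E : Type*} [PseudoMetricSpace E] {L : Set X}
    (hL : IsCompact L) {u : X → E} (hu : ContinuousOn u L) {V : Set (X × E)} (hV : IsOpen V)
    (huV : ∀ x ∈ L, (x, u x) ∈ V) :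
    ∃ δ > 0, ∀ x ∈ L, ∀ z, dist z (u x) < δ → (x, z) ∈ V := by
  have key : ∀ x ∈ L, ∀ᶠ p : ℝ × X in 𝓝 (0, x),
      p.2 ∈ L → ∀ z, dist z (u p.2) < p.1 → (p.2, z) ∈ V := by
    intro x hx
    obtain ⟨N, hN, B, hB, hNB⟩ := mem_nhds_prod_iff.mp (hV.mem_nhds (huV x hx))
    obtain ⟨ε, hε, hεB⟩ := Metric.mem_nhds_iff.mp hB
    have hux : ∀ᶠ y in 𝓝 x, y ∈ L → dist (u y) (u x) < ε / 2 :=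
      eventually_nhdsWithin_iff.mp (hu x hx (Metric.ball_mem_nhds _ (half_pos hε)))
    rw [nhds_prod_eq]
    filter_upwards [prod_mem_prod (Iio_mem_nhds (half_pos hε)) (inter_mem hN hux)]
      with ⟨δ, y⟩ ⟨hδ, hyN, hyu⟩ hyL z hz
    refine hNB (mk_mem_prod hyN (hεB ?_))
    have := hyu hyL
    simp only [mem_Iio] at hδ
    calc dist z (u x) ≤ dist z (u y) + dist (u y) (u x) := dist_triangle _ _ _
      _ < ε := by linarith
  obtain ⟨δ, hδV, hδ⟩ := (((hL.eventually_forall_of_forall_eventually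
    (P := fun δ y => y ∈ L → ∀ z, dist z (u y) < δ → (y, z) ∈ V) key).filter_mono
    nhdsWithin_le_nhds).and self_mem_nhdsWithin).exists (f := 𝓝[>] (0 : ℝ))
  exact ⟨δ, hδ, fun x hx => hδV x hx hx⟩

end Topology

section ChartPatch

variable {M : Type*} {EN : Type*} [NormedAddCommGroup EN] [NormedSpace ℝ EN]
  {HN : Type*} [TopologicalSpace HN] (I' : ModelWithCorners ℝ EN HN)
  {M' : Type*} [TopologicalSpace M'] [ChartedSpace HN M'] {p : M'} {g : M → M'} {w : M → EN}
  {x : M}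

open Classical in
noncomputable def chartPatch (p : M') (g : M → M') (w : M → EN) : M → M' := fun x =>
  if g x ∈ (extChartAt I' p).source then (extChartAt I' p).symm (w x) else g x

theorem chartPatch_of_mem (hx : g x ∈ (extChartAt I' p).source) :
    chartPatch I' p g w x = (extChartAt I' p).symm (w x) := by
  simp only [chartPatch, if_pos hx]

theorem chartPatch_eq_self (hw : w x = extChartAt I' p (g x)) : chartPatch I' p g w x = g x := by
  by_cases hx : g x ∈ (extChartAt I' p).source
  · rw [chartPatch_of_mem I' hx, hw, (extChartAt I' p).left_inv hx]
  · simp only [chartPatch, if_neg hx]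

variable [TopologicalSpace M]

theorem chartPatch_eventuallyEq (hg : ContinuousAt g x) (hx : g x ∈ (extChartAt I' p).source) :
    chartPatch I' p g w =ᶠ[𝓝 x] (extChartAt I' p).symm ∘ w := by
  filter_upwards [hg.preimage_mem_nhds ((isOpen_extChartAt_source p).mem_nhds hx)] with y hy
  exact chartPatch_of_mem I' hy

theorem continuousAt_chartPatch (hg : ContinuousAt g x) (hx : g x ∈ (extChartAt I' p).source)
    (hw : ContinuousAt w x) (hwx : w x ∈ (extChartAt I' p).target) :
    ContinuousAt (chartPatch I' p g w) x :=
  ((continuousAt_extChartAt_symm'' hwx).comp hw).congr (chartPatch_eventuallyEq I' hg hx).symm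

theorem isOpen_setOf_mem_target_and_extChartAt_symm_mem [I'.Boundaryless] {U : Set (M × M')}
    (hU : IsOpen U) (p : M') :
    IsOpen {q : M × EN | q.2 ∈ (extChartAt I' p).target ∧ (q.1, (extChartAt I' p).symm q.2) ∈ U} :=
  ContinuousOn.isOpen_inter_preimage (continuousOn_fst.prodMk
    ((continuousOn_extChartAt_symm p).comp continuousOn_snd fun _ hq => hq))
    ((isOpen_extChartAt_target p).preimage continuous_snd) hU

theorem contMDiffAt_chartPatch {EM : Type*} [NormedAddCommGroup EM] [NormedSpace ℝ EM]
    {HM : Type*} [TopologicalSpace HM] {I : ModelWithCorners ℝ EM HM} [ChartedSpace HM M]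
    [I'.Boundaryless] {n : ℕ∞} [IsManifold I' n M'] (hg : ContinuousAt g x)
    (hx : g x ∈ (extChartAt I' p).source) (hw : CMDiffAt n w x)
    (hwx : w x ∈ (extChartAt I' p).target) : CMDiffAt n (chartPatch I' p g w) x :=
  (((contMDiffOn_extChartAt_symm p).contMDiffAt ((isOpen_extChartAt_target p).mem_nhds
    hwx)).comp x hw).congr_of_eventuallyEq (chartPatch_eventuallyEq I' hg hx)

end ChartPatch

section Smoothing

variable {EM : Type*} [NormedAddCommGroup EM] [NormedSpace ℝ EM] [FiniteDimensional ℝ EM]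
  {HM : Type*} [TopologicalSpace HM] (I : ModelWithCorners ℝ EM HM)
  {M : Type*} [TopologicalSpace M] [ChartedSpace HM M] [IsManifold I ∞ M]
  [T2Space M] [SigmaCompactSpace M]
  {F : Type*} [NormedAddCommGroup F] [NormedSpace ℝ F] {n : ℕ∞}

theorem exists_contMDiff_dist_lt_eqOn {u : M → F} {C L : Set M} (hC : IsClosed C)
    (hL : IsClosed L) (hu : ContinuousOn u L) (huC : ∀ᶠ x in 𝓝ˢ C, CMDiffAt n u x)
    {δ : ℝ} (hδ : 0 < δ) :
    ∃ v : M → F, CMDiff n v ∧ (∀ x ∈ L, dist (v x) (u x) < δ) ∧ EqOn v u C := by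
  classical
  let t : M → Set F := fun x =>
    if x ∈ C then {u x} else if x ∈ L then Metric.ball (u x) δ else univ
  have ht : ∀ x, Convex ℝ (t x) := by
    intro x
    dsimp only [t]
    split_ifs
    exacts [convex_singleton _, convex_ball _ _, convex_univ]
  have hloc : ∀ x, ∃ N ∈ 𝓝 x, ∃ g : M → F, CMDiff[N] n g ∧ ∀ y ∈ N, g y ∈ t y := by
    intro x
    by_cases hxC : x ∈ C
    · refine ⟨_, eventually_nhdsSet_iff_forall.mp huC x hxC, u,
        fun y hy => hy.contMDiffWithinAt, fun y _ => ?_⟩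
      dsimp only [t]
      split_ifs <;> simp [hδ]
    · have hux : ∀ᶠ y in 𝓝 x, y ∈ L → dist (u x) (u y) < δ := by
        by_cases hxL : x ∈ L
        · filter_upwards [eventually_nhdsWithin_iff.mp (hu x hxL (Metric.ball_mem_nhds _ hδ))]
            with y hy hyL using dist_comm (u x) (u y) ▸ hy hyL
        · filter_upwards [hL.isOpen_compl.mem_nhds hxL] with y hy hyL using absurd hyL hy
      refine ⟨_, inter_mem (hC.isOpen_compl.mem_nhds hxC) hux, fun _ => u x,
        contMDiffOn_const, fun y ⟨hyC, hyL⟩ => ?_⟩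
      dsimp only [t]
      split_ifs with h1 h2
      exacts [absurd h1 hyC, hyL h2, mem_univ _]
  obtain ⟨v, hv⟩ := exists_contMDiffMap_forall_mem_convex_of_local I ht hloc
  refine ⟨v, v.contMDiff, fun x hx => ?_, fun x hx => by simpa [t, hx] using hv x⟩
  by_cases hxC : x ∈ C
  · simpa [show v x = u x by simpa [t, hxC] using hv x] using hδ
  · simpa [t, hxC, hx] using hv x

theorem exists_smoothing_supported_in {u : M → F} {W K C : Set M} (hW : IsOpen W)
    (hWc : IsCompact (closure W)) (hK : IsClosed K) (hKW : K ⊆ W) (hC : IsClosed C)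
    (hu : ContinuousOn u (closure W)) (huC : ∀ᶠ x in 𝓝ˢ C, CMDiffAt n u x)
    {V : Set (M × F)} (hV : IsOpen V) (huV : ∀ x ∈ closure W, (x, u x) ∈ V) :
    ∃ w : M → F, (∀ x ∉ W, w x = u x) ∧ EqOn w u C ∧
      (∀ x, (x, u x) ∈ V → (x, w x) ∈ V) ∧ (∀ x, ContinuousAt u x → ContinuousAt w x) ∧
      (∀ x, CMDiffAt n u x → CMDiffAt n w x) ∧ ∀ᶠ x in 𝓝ˢ K, CMDiffAt n w x := by
  have := Manifold.locallyCompact_of_finiteDimensional (M := M) I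
  obtain ⟨δ, hδ, hδV⟩ := hWc.exists_pos_forall_dist_lt_mem hu hV huV
  obtain ⟨v, hv, hvu, hvC⟩ := exists_contMDiff_dist_lt_eqOn I hC isClosed_closure hu huC hδ
  obtain ⟨χ, hχK, hχW, hχ01⟩ :=
    exists_contMDiffMap_one_nhds_of_subset_interior I (n := n) hK (hW.interior_eq.symm ▸ hKW)
  refine ⟨fun x => u x + χ x • (v x - u x), fun x hx => by simp [hχW x hx],
    fun x hx => by simp [hvC hx], fun x hxV => ?_, fun x hx => hx.add
      (χ.contMDiff.continuous.continuousAt.smul (hv.continuous.continuousAt.sub hx)),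
    fun x hx => hx.add ((χ.contMDiff x).smul ((hv x).sub hx)), ?_⟩
  · by_cases hx : x ∈ W
    · refine hδV x (subset_closure hx) _ ?_
      rw [dist_eq_norm, add_sub_cancel_left, norm_smul]
      calc ‖χ x‖ * ‖v x - u x‖ ≤ 1 * ‖v x - u x‖ := by
            gcongr
            rw [Real.norm_eq_abs, abs_le]
            constructor <;> linarith [(hχ01 x).1, (hχ01 x).2]
        _ < δ := by rw [one_mul, ← dist_eq_norm]; exact hvu x (subset_closure hx)
    · simpa [hχW x hx] using hxV
  · filter_upwards [hχK.eventually_nhdsSet] with x hx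
    exact (hv x).congr_of_eventuallyEq (hx.mono fun y hy => by simp [hy])

variable {EN : Type*} [NormedAddCommGroup EN] [NormedSpace ℝ EN]
  {HN : Type*} [TopologicalSpace HN] {I' : ModelWithCorners ℝ EN HN} [I'.Boundaryless]
  {M' : Type*} [TopologicalSpace M'] [ChartedSpace HN M'] [IsManifold I' n M']

theorem exists_smoothing_supported_in_chart {g : M → M'} (hg : Continuous g)
    {U : Set (M × M')} (hU : IsOpen U) (hgU : ∀ x, (x, g x) ∈ U) {W K C : Set M}
    (hW : IsOpen W) (hWc : IsCompact (closure W)) (hK : IsClosed K) (hKW : K ⊆ W)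
    (hC : IsClosed C) (hgC : ∀ᶠ x in 𝓝ˢ C, CMDiffAt n g x) {p : M'}
    (hWp : MapsTo g (closure W) (chartAt HN p).source) :
    ∃ h : M → M', Continuous h ∧ (∀ x, (x, h x) ∈ U) ∧ EqOn h g C ∧
      (∀ x ∉ W, h x = g x) ∧ ∀ᶠ x in 𝓝ˢ (C ∪ K), CMDiffAt n h x := by
  set e := extChartAt I' p
  set O := g ⁻¹' e.source
  have hO : IsOpen O := (isOpen_extChartAt_source p).preimage hg
  have hWO : closure W ⊆ O := by simpa only [O, e, extChartAt_source] using hWp.subset_preimage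
  set V : Set (M × EN) := {q | q.2 ∈ e.target ∧ (q.1, e.symm q.2) ∈ U}
  have hV : IsOpen V := isOpen_setOf_mem_target_and_extChartAt_symm_mem I' hU p
  have huV : ∀ x ∈ O, (x, e (g x)) ∈ V := fun x hx =>
    ⟨e.map_source hx, by simpa [e.left_inv hx] using hgU x⟩
  have hu : ContinuousOn (e ∘ g) O :=
    (continuousOn_extChartAt p).comp hg.continuousOn fun _ h => h
  have hgu : ∀ x ∈ O, CMDiffAt n g x → CMDiffAt n (e ∘ g) x := fun x hx hgx =>
    (contMDiffAt_extChartAt' (by rwa [← extChartAt_source I'])).comp x hgx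
  have huC : ∀ᶠ x in 𝓝ˢ (C ∩ closure W), CMDiffAt n (e ∘ g) x := by
    refine eventually_nhdsSet_iff_forall.mpr fun x hx => ?_
    filter_upwards [eventually_nhdsSet_iff_forall.mp hgC x hx.1, hO.mem_nhds (hWO hx.2)]
      with y hy hyO using hgu y hyO hy
  obtain ⟨w, hwW, hwC, hwV, hwcont, hwsmooth, hwK⟩ := exists_smoothing_supported_in I hW hWc hK
    hKW (hC.inter isClosed_closure) (hu.mono hWO) huC hV fun x hx => huV x (hWO hx)
  set h := chartPatch I' p g w
  have hwV' : ∀ x ∈ O, (x, w x) ∈ V := fun x hx => hwV x (huV x hx)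
  have hwt : ∀ x ∈ O, w x ∈ e.target := fun x hx => (hwV' x hx).1
  have h_near_compl : ∀ x ∉ closure W, h =ᶠ[𝓝 x] g := fun x hx =>
    eventually_of_mem (isClosed_closure.isOpen_compl.mem_nhds hx) fun y hy =>
      chartPatch_eq_self I' (hwW y fun hyW => hy (subset_closure hyW))
  have h_smooth : ∀ x ∈ O, CMDiffAt n w x → CMDiffAt n h x := fun x hx hwx =>
    contMDiffAt_chartPatch I' hg.continuousAt hx hwx (hwt x hx)
  refine ⟨h, continuous_iff_continuousAt.mpr fun x => ?_, fun x => ?_, fun x hx => ?_,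
    fun x hx => chartPatch_eq_self I' (hwW x hx), ?_⟩
  · by_cases hxO : x ∈ O
    · exact continuousAt_chartPatch I' hg.continuousAt hxO
        (hwcont x (hu.continuousAt (hO.mem_nhds hxO))) (hwt x hxO)
    · exact hg.continuousAt.congr (h_near_compl x fun hx => hxO (hWO hx)).symm
  · show (x, chartPatch I' p g w x) ∈ U
    by_cases hxO : x ∈ O
    · rw [chartPatch_of_mem I' hxO]
      exact (hwV' x hxO).2
    · rw [chartPatch_eq_self I' (hwW x fun hx => hxO (hWO (subset_closure hx)))]
      exact hgU x
  · by_cases hxW : x ∈ W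
    · exact chartPatch_eq_self I' (hwC ⟨hx, subset_closure hxW⟩)
    · exact chartPatch_eq_self I' (hwW x hxW)
  · rw [nhdsSet_union, eventually_sup]
    constructor
    · filter_upwards [hgC] with x hx
      by_cases hxO : x ∈ O
      · exact h_smooth x hxO (hwsmooth x (hgu x hxO hx))
      · exact hx.congr_of_eventuallyEq (h_near_compl x fun h => hxO (hWO h))
    · filter_upwards [hwK, hO.mem_nhdsSet.mpr ((hKW.trans subset_closure).trans hWO)]
        with x hx hxO using h_smooth x hxO hx

theorem exists_contMDiff_eqOn_of_chart_cover {g₀ : M → M'} (hg₀ : Continuous g₀)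
    {U : Set (M × M')} (hU : IsOpen U) (hg₀U : ∀ x, (x, g₀ x) ∈ U) {A : Set M}
    (hA : IsClosed A) (hg₀A : ∀ᶠ x in 𝓝ˢ A, CMDiffAt n g₀ x) {W K : ℕ → Set M}
    (hW : ∀ i, IsOpen (W i)) (hWc : ∀ i, IsCompact (closure (W i))) (hWlf : LocallyFinite W)
    (hK : ∀ i, IsClosed (K i)) (hKW : ∀ i, K i ⊆ W i) (hKcov : ⋃ i, K i = univ) {p : ℕ → M'}
    (hUp : ∀ q ∈ U, ∀ i, q.1 ∈ closure (W i) → q.2 ∈ (chartAt HN (p i)).source) :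
    ∃ g : M → M', CMDiff n g ∧ EqOn g g₀ A ∧ ∀ x, (x, g x) ∈ U := by
  let P : ℕ → (M → M') → Prop := fun k g =>
    Continuous g ∧ (∀ x, (x, g x) ∈ U) ∧ EqOn g g₀ A ∧
      ∀ᶠ x in 𝓝ˢ (A ∪ ⋃ i < k, K i), CMDiffAt n g x
  have base : P 0 g₀ := ⟨hg₀, hg₀U, fun _ _ => rfl, by simpa using hg₀A⟩
  have step : ∀ k g, P k g → ∃ h, P (k + 1) h ∧ ∀ x ∉ W k, h x = g x := by
    rintro k g ⟨hg, hgU, hgA, hgs⟩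
    obtain ⟨h, hh, hhU, hhg, hhW, hhs⟩ := exists_smoothing_supported_in_chart I hg hU hgU (hW k)
      (hWc k) (hK k) (hKW k) (hA.union ((finite_lt_nat k).isClosed_biUnion fun i _ => hK i)) hgs
      fun x hx => hUp _ (hgU x) k hx
    refine ⟨h, ⟨hh, hhU, fun x hx => (hhg (Or.inl hx)).trans (hgA hx), ?_⟩, hhW⟩
    rwa [biUnion_lt_succ, ← union_assoc]
  obtain ⟨g, hgP, hgW⟩ := exists_seq_of_forall_exists_succ base step
  have hlf : LocallyFinite fun k => {x | g (k + 1) x ≠ g k x} :=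
    hWlf.subset fun k x hx => not_not.mp fun h => hx (hgW k x h)
  obtain ⟨G, hG⟩ := hlf.exists_forall_eventually_atTop_eventuallyEq
  have hGg : ∀ x, ∃ k, g k x = G x := fun x => ((hG x).exists).imp fun _ h => h.eq_of_nhds
  refine ⟨G, fun x => ?_, fun x hx => ?_, fun x => ?_⟩
  · obtain ⟨i, hi⟩ := mem_iUnion.mp (hKcov.symm ▸ mem_univ x)
    obtain ⟨k, hk, hik⟩ := ((hG x).and (eventually_gt_atTop i)).exists
    exact ((hgP k).2.2.2.self_of_nhdsSet x (Or.inr (mem_biUnion hik hi))).congr_of_eventuallyEq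
      hk.symm
  · obtain ⟨k, hk⟩ := hGg x
    exact hk ▸ (hgP k).2.2.1 hx
  · obtain ⟨k, hk⟩ := hGg x
    exact hk ▸ (hgP k).2.1 x

end Smoothing

theorem stmt3_general
    {EM : Type*} [NormedAddCommGroup EM] [NormedSpace ℝ EM] [FiniteDimensional ℝ EM]
    {HM : Type*} [TopologicalSpace HM] (I : ModelWithCorners ℝ EM HM)
    {M : Type*} [TopologicalSpace M] [ChartedSpace HM M] [IsManifold I (⊤ : ℕ∞) M]
    [T2Space M] [SecondCountableTopology M]
    {EN : Type*} [NormedAddCommGroup EN] [NormedSpace ℝ EN]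
    {HN : Type*} [TopologicalSpace HN] (I' : ModelWithCorners ℝ EN HN) [I'.Boundaryless]
    {M' : Type*} [TopologicalSpace M'] [ChartedSpace HN M'] [IsManifold I' (⊤ : ℕ∞) M']
    (f : M → M') (hf : Continuous f)
    (A : Set M) (hA : IsClosed A)
    (hsm : ∃ V : Set M, IsOpen V ∧ A ⊆ V ∧ ContMDiffOn I I' (⊤ : ℕ∞) f V)
    (U : Set (M × M')) (hU : IsOpen U) (hgraph : ∀ x : M, (x, f x) ∈ U) :
    ∃ g : M → M', ContMDiff I I' (⊤ : ℕ∞) g ∧ (∀ x ∈ A, g x = f x) ∧ ∀ x : M, (x, g x) ∈ U := by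
  rcases isEmpty_or_nonempty M with hM | hM
  · exact ⟨f, fun x => isEmptyElim x, fun x => isEmptyElim x, fun x => isEmptyElim x⟩
  have := Manifold.locallyCompact_of_finiteDimensional (M := M) I
  obtain ⟨V, hV, hAV, hfV⟩ := hsm
  obtain ⟨W, K, hW, hWc, hWs, hWlf, hK, hKW, hKcov⟩ := exists_nat_locallyFinite_precompact_cover
    (fun x => f ⁻¹' (chartAt HN (f x)).source)
    fun x => hf.continuousAt.preimage_mem_nhds (chart_source_mem_nhds HN (f x))
  choose c hc using hWs
  let U' := U ∩ {q | ∀ i, q.1 ∈ closure (W i) → q.2 ∈ (chartAt HN (f (c i))).source}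
  have hU' : IsOpen U' := hU.inter <| hWlf.closure.isOpen_setOf_forall_mem_imp
    (fun _ => isClosed_closure) fun _ => (chartAt HN _).open_source
  obtain ⟨g, hg, hgA, hgU⟩ := exists_contMDiff_eqOn_of_chart_cover I hf hU'
    (fun x => ⟨hgraph x, fun i hx => hc i hx⟩) hA
    (eventually_of_mem (hV.mem_nhdsSet.mpr hAV) fun x hx => hfV.contMDiffAt (hV.mem_nhds hx))
    hW hWc hWlf hK hKW hKcov fun q hq => hq.2
  exact ⟨g, hg, hgA, fun x => (hgU x).1⟩

/-- Let `M` be a smooth manifold possibly with boundary, `M'` a smooth manifold without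
boundary, `A ⊆ M` a closed subset, and `f : M → M'` a continuous map which is smooth on an
open neighborhood of `A`. Then for every open set `U ⊆ M × M'` containing the graph of `f`
there is a smooth map `g : M → M'` with `g = f` on `A` whose graph is contained in `U`. -/
theorem stmt3
    {EM : Type*} [NormedAddCommGroup EM] [NormedSpace ℝ EM] [FiniteDimensional ℝ EM]
    {HM : Type*} [TopologicalSpace HM] (I : ModelWithCorners ℝ EM HM)
    {M : Type*} [TopologicalSpace M] [ChartedSpace HM M] [IsManifold I (⊤ : ℕ∞) M]
    [T2Space M] [SecondCountableTopology M]
    {EN : Type*} [NormedAddCommGroup EN] [NormedSpace ℝ EN] [FiniteDimensional ℝ EN]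
    {HN : Type*} [TopologicalSpace HN] (I' : ModelWithCorners ℝ EN HN) [I'.Boundaryless]
    {M' : Type*} [TopologicalSpace M'] [ChartedSpace HN M'] [IsManifold I' (⊤ : ℕ∞) M']
    [T2Space M'] [SecondCountableTopology M']
    (f : M → M') (hf : Continuous f)
    (A : Set M) (hA : IsClosed A)
    (hsm : ∃ V : Set M, IsOpen V ∧ A ⊆ V ∧ ContMDiffOn I I' (⊤ : ℕ∞) f V)
    (U : Set (M × M')) (hU : IsOpen U) (hgraph : ∀ x : M, (x, f x) ∈ U) :
    ∃ g : M → M', ContMDiff I I' (⊤ : ℕ∞) g ∧ (∀ x ∈ A, g x = f x) ∧ ∀ x : M, (x, g x) ∈ U :=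
  stmt3_general I I' f hf A hA hsm U hU hgraph
end

section
/- Let G be a group and Z a subgroup of the center of G, and let Γ be a subgroup of G with Z ≤ Γ. Let α, α' : Γ → G be injective group homomorphisms such that α maps Z onto Z (that is, α(Z) = Z) and α(γ)⁻¹α'(γ) ∈ Z for every γ ∈ Γ. Then there exists a unique group homomorphism e : Γ → Z such that α'(γ) = α(γ)·α(e(γ)) for all γ ∈ Γ. -/
/-! Since `α γ` and `α' γ` differ by the central factor `(α γ)⁻¹ * α' γ`, the map
`γ ↦ (α γ)⁻¹ * α' γ` is a homomorphism `Γ →* G` with values in `Z`. As `α` restricts to an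
isomorphism of `Z` onto `α(Z) = Z`, this homomorphism factors uniquely through
`α ∘ inclusion : Z →* G`, and the factor is `e`. -/

namespace MonoidHom

variable {H G A : Type*} [Group H] [Group G] [Group A]

def invMulOfMemCenter (f g : H →* G) (hc : ∀ x, (f x)⁻¹ * g x ∈ Subgroup.center G) :
    H →* G where
  toFun x := (f x)⁻¹ * g x
  map_one' := by simp
  map_mul' x y := by
    have hcomm := Subgroup.mem_center_iff.mp (hc x) (f y)⁻¹
    calc (f (x * y))⁻¹ * g (x * y) = (f y)⁻¹ * ((f x)⁻¹ * g x) * g y := by simp [mul_assoc]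
      _ = (f x)⁻¹ * g x * ((f y)⁻¹ * g y) := by rw [hcomm, mul_assoc]

@[simp]
theorem invMulOfMemCenter_apply (f g : H →* G) (hc : ∀ x, (f x)⁻¹ * g x ∈ Subgroup.center G)
    (x : H) : invMulOfMemCenter f g hc x = (f x)⁻¹ * g x :=
  rfl

theorem existsUnique_comp_eq_of_injective {φ : A →* G} (hφ : Function.Injective φ)
    (d : H →* G) (hd : ∀ x, d x ∈ φ.range) : ∃! e : H →* A, φ.comp e = d := by
  have hlift :
      φ.comp ((ofInjective hφ).symm.toMonoidHom.comp (d.codRestrict φ.range hd)) = d := by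
    ext x
    exact apply_ofInjective_symm hφ _
  exact ⟨_, hlift, fun e he => (cancel_left hφ).mp (he.trans hlift.symm)⟩

end MonoidHom

theorem stmt11_general {G : Type*} [Group G] (Z Γ : Subgroup G)
    (hZc : Z ≤ Subgroup.center G) (hZΓ : Z ≤ Γ)
    (α α' : Γ →* G) (hα : Function.Injective α)
    (hαZ : Subgroup.map α (Z.subgroupOf Γ) = Z)
    (h : ∀ γ : Γ, (α γ)⁻¹ * α' γ ∈ Z) :
    ∃! e : Γ →* Z, ∀ γ : Γ, α' γ = α γ * α (Subgroup.inclusion hZΓ (e γ)) := by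
  let φ := α.comp (Subgroup.inclusion hZΓ)
  have hφ : Function.Injective φ := hα.comp (Subgroup.inclusion_injective hZΓ)
  have hφZ : φ.range = Z := by
    rw [MonoidHom.range_comp, Subgroup.inclusion_range, hαZ]
  let d := MonoidHom.invMulOfMemCenter α α' fun γ => hZc (h γ)
  have hd : ∀ γ, d γ ∈ φ.range := fun γ => by rw [hφZ]; exact h γ
  convert MonoidHom.existsUnique_comp_eq_of_injective hφ d hd using 2 with e
  rw [MonoidHom.ext_iff]
  refine forall_congr' fun γ => ?_
  rw [MonoidHom.comp_apply, MonoidHom.invMulOfMemCenter_apply, eq_inv_mul_iff_mul_eq, eq_comm]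
  rfl

/-- Let `G` be a group, `Z` a central subgroup, `Γ` a subgroup containing `Z`, and
`α, α' : Γ → G` injective homomorphisms with `α(Z) = Z` and `α(γ)⁻¹ * α'(γ) ∈ Z` for all
`γ ∈ Γ`. Then there is a unique homomorphism `e : Γ → Z` with
`α'(γ) = α(γ) * α(e(γ))` for all `γ`. -/
theorem stmt11 {G : Type*} [Group G] (Z Γ : Subgroup G)
    (hZc : Z ≤ Subgroup.center G) (hZΓ : Z ≤ Γ)
    (α α' : Γ →* G) (hα : Function.Injective α) (hα' : Function.Injective α')
    (hαZ : Subgroup.map α (Z.subgroupOf Γ) = Z)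
    (h : ∀ γ : Γ, (α γ)⁻¹ * α' γ ∈ Z) :
    ∃! e : Γ →* Z, ∀ γ : Γ, α' γ = α γ * α (Subgroup.inclusion hZΓ (e γ)) :=
  stmt11_general Z Γ hZc hZΓ α α' hα hαZ h
end

section
/- Let Γ be a group and Z a subgroup of the center of Γ such that the quotient group Γ/Z has trivial center. Suppose e : Γ → Z is a group homomorphism and δ ∈ Γ is such that γ·e(γ) = δγδ⁻¹ for all γ ∈ Γ. Then e is the trivial homomorphism. -/
/-! The relation `γ * e γ = δ * γ * δ⁻¹` says that the commutator `⁅δ, γ⁆` lies in `Z` for every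
`γ`, i.e. that the image of `δ` in `Γ ⧸ Z` is central. As that center is trivial, `δ ∈ Z`, so `δ` is
central in `Γ`; conjugation by `δ` is then the identity and `e γ = 1`. -/

open scoped commutatorElement

theorem QuotientGroup.mk_mem_center_of_forall_commutator_mem {G : Type*} [Group G]
    (N : Subgroup G) [N.Normal] {x : G} (hx : ∀ y, ⁅x, y⁆ ∈ N) :
    (x : G ⧸ N) ∈ Subgroup.center (G ⧸ N) := by
  have : x ∈ Subgroup.upperCentralSeriesStep N := hx
  rwa [Subgroup.upperCentralSeriesStep_eq_comap_center] at this

/-- Let `Γ` be a group and `Z` a central subgroup such that `Γ/Z` has trivial center.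
If `e : Γ → Z` is a homomorphism and `δ ∈ Γ` satisfies `γ * e(γ) = δγδ⁻¹` for all `γ`,
then `e` is trivial. -/
theorem stmt12 {Γ : Type*} [Group Γ] (Z : Subgroup Γ) [Z.Normal]
    (hZ : Z ≤ Subgroup.center Γ)
    (hcenter : Subgroup.center (Γ ⧸ Z) = ⊥)
    (e : Γ →* Z) (δ : Γ)
    (h : ∀ γ : Γ, γ * (e γ : Γ) = δ * γ * δ⁻¹) :
    e = 1 := by
  have hcomm : ∀ γ, ⁅δ, γ⁆ ∈ Z := fun γ => by
    rw [commutatorElement_def, ← h γ]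
    exact Subgroup.Normal.conj_mem inferInstance _ (e γ).2 γ
  have hδZ : δ ∈ Z := by
    have := QuotientGroup.mk_mem_center_of_forall_commutator_mem Z hcomm
    rwa [hcenter, Subgroup.mem_bot, QuotientGroup.eq_one_iff] at this
  ext γ
  have hconj : δ * γ * δ⁻¹ = γ := by
    rw [(Subgroup.mem_center_iff.mp (hZ hδZ) γ).symm, mul_inv_cancel_right]
  simpa using (h γ).trans hconj
end
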